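/- arXiv:1901.01127 — 7 statements merged into one kernel-verified Lean document; each statement's English description precedes it below -/
import Mathlib

section
/- Let (a_n) be a real sequence and α ∈ ℝ̄. If α is an accumulation point (cluster point) of the sequence (a_n) in ℝ̄, then α ∈ AAR_{(a_n)}. -/
/-!
Rearrange `a` so that the terms of a subsequence converging to `α` fill almost every position,
while each of the remaining indices `m 0, m 1, …` is inserted at a sparse position `P k`,
chosen so large that `P k ≥ (k + 1) * ∑ j ≤ k, (1 + |a (m j)|)`. The inserted terms then
contribute only `o(n)` to the `n`-th partial sum, and the means of the rearranged sequence behave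
like Cesàro means of a sequence tending to `α`.
-/

open Filter Topology

/-- Arithmetic mean of the first `n` terms of a real sequence. -/
noncomputable def avgSeq (a : ℕ → ℝ) (n : ℕ) : ℝ := (∑ i ∈ Finset.range n, a i) / n

/-- `a` tends to `α ∈ ℝ̄` in average: the sequence of arithmetic means tends to `α`. -/
def avgTendsTo (a : ℕ → ℝ) (α : EReal) : Prop :=
  Tendsto (fun n => ((avgSeq a n : ℝ) : EReal)) atTop (𝓝 α)

/-- The set of points of `ℝ̄` accessible in average by rearrangement of `a`. -/
def AAR (a : ℕ → ℝ) : Set EReal :=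
  {α | ∃ p : ℕ → ℕ, Function.Bijective p ∧ avgTendsTo (fun n => a (p n)) α}

/-- The interleaving `(b_n)||(c_n)` (0-indexed: `a (2n) = b n`, `a (2n+1) = c n`). -/
noncomputable def interleave (b c : ℕ → ℝ) : ℕ → ℝ :=
  fun n => if n % 2 = 0 then b (n / 2) else c (n / 2)

open Function

theorem StrictMono.tendsto_inf_principal_range_iff {α : Type*} {f : ℕ → α} {ψ : ℕ → ℕ}
    (hψ : StrictMono ψ) {l : Filter α} :
    Tendsto f (atTop ⊓ 𝓟 (Set.range ψ)) l ↔ Tendsto (f ∘ ψ) atTop l := by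
  rw [← map_comap, comap_embedding_atTop (fun _ _ => hψ.le_iff_le) fun n => ⟨n, hψ.le_apply⟩,
    tendsto_map'_iff]

theorem Function.Injective.tendsto_comp_inf_principal {α : Type*} {f : ℕ → α} {p ψ : ℕ → ℕ}
    {S : Set ℕ} {l : Filter α} (hp : Injective p) (hψ : StrictMono ψ)
    (hpS : Set.MapsTo p S (Set.range ψ)) (hf : Tendsto (f ∘ ψ) atTop l) :
    Tendsto (f ∘ p) (atTop ⊓ 𝓟 S) l := by
  have hp_top : Tendsto p atTop atTop := Nat.cofinite_eq_atTop ▸ hp.tendsto_cofinite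
  exact (hψ.tendsto_inf_principal_range_iff.2 hf).comp
    (tendsto_inf.2 ⟨hp_top.mono_left inf_le_left, tendsto_principal_principal.2 hpS |>.mono_left
      inf_le_right⟩)

theorem exists_bijective_comp_eq {α β : Type*} [Countable α] {P m : β → α}
    (hP : Injective P) (hm : Injective m) (hPc : (Set.range P)ᶜ.Infinite)
    (hmc : (Set.range m)ᶜ.Infinite) :
    ∃ p : α → α, Bijective p ∧ p ∘ P = m ∧ Set.MapsTo p (Set.range P)ᶜ (Set.range m)ᶜ := by
  classical
  have := hPc.to_subtype
  have := hmc.to_subtype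
  obtain ⟨eC⟩ := nonempty_equiv_of_countable (α := ((Set.range P)ᶜ : Set α))
    (β := ((Set.range m)ᶜ : Set α))
  let e := Equiv.subtypeCongr ((Equiv.ofInjective P hP).symm.trans (Equiv.ofInjective m hm)) eC
  refine ⟨e, e.bijective, funext fun k => ?_, fun i hi => ?_⟩
  · simp [e, Equiv.subtypeCongr]
  · simp [e, Equiv.subtypeCongr, Equiv.sumCompl_symm_apply_of_neg hi]

theorem Nat.exists_strictMono_ge_infinite_compl_range (f : ℕ → ℝ) :
    ∃ P : ℕ → ℕ, StrictMono P ∧ (∀ k, f k ≤ P k) ∧ (Set.range P)ᶜ.Infinite := by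
  refine ⟨fun k => 2 * (∑ j ∈ Finset.range (k + 1), ⌈f j⌉₊ + k), ?_, fun k => ?_, ?_⟩
  · refine strictMono_nat_of_lt_succ fun k => ?_
    simp only [Finset.sum_range_succ _ (k + 1)]
    omega
  · calc f k ≤ ⌈f k⌉₊ := Nat.le_ceil _
      _ ≤ _ := by
        have := Finset.single_le_sum (fun j _ => Nat.zero_le ⌈f j⌉₊)
          (Finset.self_mem_range_succ k)
        exact_mod_cast (by omega : ⌈f k⌉₊ ≤ 2 * (∑ j ∈ Finset.range (k + 1), ⌈f j⌉₊ + k))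
  · refine Set.infinite_of_injective_forall_mem (f := fun n => 2 * n + 1)
      (fun _ _ h => by simp only at h; omega) fun n ⟨k, hk⟩ => by simp only at hk; omega

theorem tendsto_sum_filter_mem_range_div_zero {g : ℕ → ℝ} (hg : ∀ i, 0 ≤ g i) {P : ℕ → ℕ}
    [DecidablePred (· ∈ Set.range P)] (hP : StrictMono P)
    (hPg : ∀ k, (k + 1) * ∑ j ∈ Finset.range (k + 1), g (P j) ≤ P k) :
    Tendsto (fun n : ℕ => (∑ i ∈ (Finset.range n).filter (· ∈ Set.range P), g i) / n)
      atTop (𝓝 0) := by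
  set V : ℕ → ℝ := fun K => ∑ j ∈ Finset.range (K + 1), g (P j)
  have hV0 : ∀ K, 0 ≤ V K := fun K => Finset.sum_nonneg fun _ _ => hg _
  have hV : Monotone V := fun K L hKL =>
    Finset.sum_le_sum_of_subset_of_nonneg (by simpa using hKL) fun _ _ _ => hg _
  have reindex : ∀ n, ∑ i ∈ (Finset.range n).filter (· ∈ Set.range P), g i =
      ∑ k ∈ (Finset.range n).filter (P · < n), g (P k) := by
    intro n
    rw [← Finset.sum_image (s := (Finset.range n).filter (P · < n))
      fun _ _ _ _ h => hP.injective h]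
    congr 1
    ext i
    simp only [Finset.mem_filter, Finset.mem_range, Finset.mem_image]
    constructor
    · rintro ⟨hi, k, rfl⟩
      exact ⟨k, ⟨(hP.id_le k).trans_lt hi, hi⟩, rfl⟩
    · rintro ⟨k, ⟨-, hk⟩, rfl⟩
      exact ⟨hk, k, rfl⟩
  -- the `j` with `P j < n` lie below `k := F.max'`, and `hPg` bounds their weight by `n / (k + 1)`
  have bound : ∀ K n, ∑ k ∈ (Finset.range n).filter (P · < n), g (P k) ≤ V K + n / (K + 1) := by
    intro K n
    set F := (Finset.range n).filter (P · < n)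
    rcases F.eq_empty_or_nonempty with hF | hF
    · rw [hF, Finset.sum_empty]
      have := hV0 K
      positivity
    set k := F.max' hF
    have hsum : ∑ k ∈ F, g (P k) ≤ V k :=
      Finset.sum_le_sum_of_subset_of_nonneg
        (fun j hj => Finset.mem_range_succ_iff.2 (F.le_max' j hj)) fun _ _ _ => hg _
    have hkn : (P k : ℝ) < n := by exact_mod_cast (Finset.mem_filter.1 (F.max'_mem hF)).2
    rcases le_or_gt k K with hkK | hKk
    · have : 0 ≤ (n : ℝ) / (K + 1) := by positivity
      linarith [hV hkK]
    · have hk : V k ≤ n / (K + 1) := by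
        rw [le_div_iff₀ (by positivity)]
        have : (K : ℝ) + 1 ≤ k + 1 := by gcongr
        nlinarith [hPg k, hV0 k]
      linarith [hV0 K]
  refine tendsto_order.2 ⟨fun ε hε => Eventually.of_forall fun n => hε.trans_le ?_,
    fun ε hε => ?_⟩
  · exact div_nonneg (Finset.sum_nonneg fun _ _ => hg _) n.cast_nonneg
  obtain ⟨K, hK⟩ := exists_nat_one_div_lt (half_pos hε)
  filter_upwards [(tendsto_const_div_atTop_nhds_zero_nat (V K)).eventually
    (gt_mem_nhds (half_pos hε)), eventually_gt_atTop 0] with n hn hn0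
  have hn0 : (0 : ℝ) < n := by exact_mod_cast hn0
  rw [reindex, div_lt_iff₀ hn0]
  have := bound K n
  rw [div_lt_iff₀ hn0] at hn
  have : (n : ℝ) / (K + 1) = n * (1 / (K + 1)) := by ring
  nlinarith

theorem avgSeq_neg (c : ℕ → ℝ) (n : ℕ) : avgSeq (fun i => -c i) n = -avgSeq c n := by
  simp [avgSeq, neg_div]

theorem eventually_lt_avgSeq {c : ℕ → ℝ} {S : Set ℕ} [DecidablePred (· ∈ S)] {r r' : ℝ}
    (hr' : r' < r) (hc : ∀ᶠ i in atTop ⊓ 𝓟 Sᶜ, r ≤ c i)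
    (hS : Tendsto (fun n : ℕ => (∑ i ∈ (Finset.range n).filter (· ∈ S), (1 + |c i|)) / n)
      atTop (𝓝 0)) :
    ∀ᶠ n in atTop, r' < avgSeq c n := by
  set d : ℕ → ℝ := fun i => if i ∈ S then 0 else max (r - c i) 0
  have hd : Tendsto (fun n : ℕ => (n : ℝ)⁻¹ * ∑ i ∈ Finset.range n, d i) atTop (𝓝 0) := by
    refine Tendsto.cesaro (tendsto_const_nhds.congr' ?_)
    filter_upwards [eventually_inf_principal.1 hc] with i hi
    by_cases hiS : i ∈ S
    · simp [d, hiS]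
    · simp [d, hiS, hi hiS]
  have hdeficit : ∀ n, ∑ i ∈ Finset.range n, (r - c i) ≤
      ∑ i ∈ Finset.range n, d i +
        (1 + |r|) * ∑ i ∈ (Finset.range n).filter (· ∈ S), (1 + |c i|) := by
    intro n
    rw [Finset.mul_sum, Finset.sum_filter, ← Finset.sum_add_distrib]
    refine Finset.sum_le_sum fun i _ => ?_
    by_cases hiS : i ∈ S
    · simp only [d, hiS, if_true, zero_add]
      nlinarith [le_abs_self r, neg_abs_le (c i), abs_nonneg r, abs_nonneg (c i)]
    · simp only [d, hiS, if_false, add_zero]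
      exact le_max_left _ _
  have hlim := (hd.add (hS.const_mul (1 + |r|))).eventually
    (gt_mem_nhds (show 0 + (1 + |r|) * 0 < r - r' by linarith))
  filter_upwards [hlim, eventually_gt_atTop 0] with n hn hn0
  have hn0 : (0 : ℝ) < n := by exact_mod_cast hn0
  have := hdeficit n
  rw [Finset.sum_sub_distrib, Finset.sum_const, Finset.card_range, nsmul_eq_mul] at this
  rw [inv_mul_eq_div, mul_div_assoc', ← add_div, div_lt_iff₀ hn0] at hn
  rw [avgSeq, lt_div_iff₀ hn0]
  nlinarith

theorem eventually_lt_avgSeq_of_lt {c : ℕ → ℝ} {S : Set ℕ} [DecidablePred (· ∈ S)] {α : EReal}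
    (hc : Tendsto (fun i => (c i : EReal)) (atTop ⊓ 𝓟 Sᶜ) (𝓝 α))
    (hS : Tendsto (fun n : ℕ => (∑ i ∈ (Finset.range n).filter (· ∈ S), (1 + |c i|)) / n)
      atTop (𝓝 0))
    {l : EReal} (hl : l < α) :
    ∀ᶠ n in atTop, l < avgSeq c n := by
  obtain ⟨r, hlr, hrα⟩ := EReal.lt_iff_exists_real_btwn.1 hl
  obtain ⟨r', hlr', hr'r⟩ := EReal.lt_iff_exists_real_btwn.1 hlr
  have hc' : ∀ᶠ i in atTop ⊓ 𝓟 Sᶜ, r ≤ c i :=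
    (hc.eventually (lt_mem_nhds hrα)).mono fun i hi => (EReal.coe_lt_coe_iff.1 hi).le
  filter_upwards [eventually_lt_avgSeq (EReal.coe_lt_coe_iff.1 hr'r) hc' hS] with n hn
  exact hlr'.trans (EReal.coe_lt_coe_iff.2 hn)

theorem avgTendsTo_of_tendsto_inf_principal_compl {c : ℕ → ℝ} {S : Set ℕ}
    [DecidablePred (· ∈ S)] {α : EReal}
    (hc : Tendsto (fun i => (c i : EReal)) (atTop ⊓ 𝓟 Sᶜ) (𝓝 α))
    (hS : Tendsto (fun n : ℕ => (∑ i ∈ (Finset.range n).filter (· ∈ S), (1 + |c i|)) / n)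
      atTop (𝓝 0)) :
    avgTendsTo c α := by
  refine tendsto_order.2 ⟨fun l hl => eventually_lt_avgSeq_of_lt hc hS hl, fun u hu => ?_⟩
  have hneg := eventually_lt_avgSeq_of_lt (c := fun i => -c i) (α := -α)
    (by simpa only [EReal.coe_neg, Function.comp_def] using (continuous_neg.tendsto α).comp hc)
    (by simpa only [abs_neg] using hS) (EReal.neg_lt_neg_iff.2 hu)
  filter_upwards [hneg] with n hn
  rwa [avgSeq_neg, EReal.coe_neg, EReal.neg_lt_neg_iff] at hn

/-- If `α ∈ ℝ̄` is an accumulation point of `(a_n)` (some subsequence tends to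
`α` in `ℝ̄`), then `α` is accessible in average by rearrangement of `(a_n)`. -/
theorem stmt2 (a : ℕ → ℝ) (α : EReal)
    (h : ∃ φ : ℕ → ℕ, StrictMono φ ∧
      Tendsto (fun k => ((a (φ k) : ℝ) : EReal)) atTop (𝓝 α)) :
    α ∈ AAR a := by
  classical
  obtain ⟨φ, hφ, hlim⟩ := h
  -- only the even-indexed terms of the subsequence are used as good terms, so that infinitely
  -- many indices remain to be placed at sparse positions
  set ψ : ℕ → ℕ := fun j => φ (2 * j)
  have hψ : StrictMono ψ := hφ.comp (strictMono_mul_left_of_pos two_pos)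
  have hT : (Set.range ψ)ᶜ.Infinite := Set.infinite_of_injective_forall_mem
    (f := fun j => φ (2 * j + 1)) (fun _ _ h => by have := hφ.injective h; omega)
    fun j ⟨k, hk⟩ => by have := hφ.injective hk; omega
  obtain ⟨m, hm, hm_range⟩ : ∃ m : ℕ → ℕ, Injective m ∧ Set.range m = (Set.range ψ)ᶜ :=
    ⟨_, Nat.nth_injective hT, Nat.range_nth_of_infinite hT⟩
  obtain ⟨P, hP, hPm, hPc⟩ := Nat.exists_strictMono_ge_infinite_compl_range
    fun k => (k + 1) * ∑ j ∈ Finset.range (k + 1), (1 + |a (m j)|)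
  obtain ⟨p, hp, hpP, hpc⟩ := exists_bijective_comp_eq hP.injective hm hPc
    (by rw [hm_range, compl_compl]; exact Set.infinite_range_of_injective hψ.injective)
  refine ⟨p, hp, avgTendsTo_of_tendsto_inf_principal_compl (S := Set.range P) ?_ ?_⟩
  · exact hp.injective.tendsto_comp_inf_principal (f := fun i => (a i : EReal)) hψ
      (by simpa only [hm_range, compl_compl] using hpc)
      (hlim.comp (strictMono_mul_left_of_pos two_pos).tendsto_atTop)
  · exact tendsto_sum_filter_mem_range_div_zero (fun _ => by positivity) hP fun k => by
      simpa only [← hpP, Function.comp_apply] using hPm k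
end

section
/- Let (a_n), (b_n) be real sequences with a_n → a and b_n → b, where a, b ∈ ℝ and a < b, and let α, β > 0 with α + β = 1. Then there exists a merge (d_n) of the two sequences (a_n) and (b_n) such that (d_n) tends to αa + βb in average. -/
open Filter Topology

/-- `d` is a merge of `a` and `b`: `ℕ` is partitioned into two disjoint infinite
sets (the ranges of the strictly monotone maps `f`, `g`) such that the terms of
`d` along their increasing enumerations are exactly `a` and `b` respectively. -/
def IsMerge (d a b : ℕ → ℝ) : Prop :=
  ∃ f g : ℕ → ℕ, StrictMono f ∧ StrictMono g ∧
    Disjoint (Set.range f) (Set.range g) ∧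
    Set.range f ∪ Set.range g = Set.univ ∧
    (∀ n, d (f n) = a n) ∧ (∀ n, d (g n) = b n)

/-!
Send the `m`-th place to `a` exactly when `⌊α m⌋₊ < ⌊α (m + 1)⌋₊`. As `α ≤ 1` this floor grows by
at most one per step, so exactly `⌊α n⌋₊ ~ α n` of the first `n` places go to `a` and `~ β n` go
to `b`. The mean of the first `n` terms of the merge is then `(α + o(1))` times a Cesàro mean of
`a` plus `(β + o(1))` times one of `b`, taken over lengths that tend to infinity because
`α, β > 0`; both Cesàro means converge.
-/

namespace Nat

variable (p : ℕ → Prop) [DecidablePred p]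

theorem count_add_count_not (n : ℕ) : count p n + count (¬p ·) n = n := by
  simpa [count_eq_card_filter_range] using
    Finset.card_filter_add_card_filter_not (s := Finset.range n) p

theorem infinite_setOf_of_tendsto_count (h : Tendsto (count p) atTop atTop) :
    {m | p m}.Infinite := by
  intro hfin
  obtain ⟨n, hn⟩ := (h.eventually_gt_atTop hfin.toFinset.card).exists
  exact (count_le_card hfin n).not_gt hn

theorem count_floor_mul_lt_floor_mul_succ {α : ℝ} (h0 : 0 ≤ α) (h1 : α ≤ 1) (n : ℕ) :
    count (fun m : ℕ => ⌊α * m⌋₊ < ⌊α * (m + 1 : ℕ)⌋₊) n = ⌊α * n⌋₊ := by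
  induction n with
  | zero => simp
  | succ n ih =>
    have hmono : ⌊α * n⌋₊ ≤ ⌊α * (n + 1 : ℕ)⌋₊ := floor_le_floor (by gcongr; omega)
    have hstep : ⌊α * (n + 1 : ℕ)⌋₊ ≤ ⌊α * n⌋₊ + 1 := by
      rw [← floor_add_one (by positivity)]
      exact floor_le_floor (by push_cast; nlinarith)
    rw [count_succ, ih]
    split_ifs <;> omega

end Nat

theorem tendsto_atTop_of_tendsto_div_natCast {c : ℕ → ℕ} {α : ℝ}
    (hc : Tendsto (fun n => (c n : ℝ) / n) atTop (𝓝 α)) (hα : 0 < α) :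
    Tendsto c atTop atTop := by
  rw [← tendsto_natCast_atTop_iff (R := ℝ)]
  refine (hc.pos_mul_atTop hα tendsto_natCast_atTop_atTop).congr' ?_
  filter_upwards [eventually_ne_atTop 0] with n hn
  field_simp

theorem tendsto_count_not_div_natCast {p : ℕ → Prop} [DecidablePred p] {α : ℝ}
    (hp : Tendsto (fun n => (Nat.count p n : ℝ) / n) atTop (𝓝 α)) :
    Tendsto (fun n => (Nat.count (¬p ·) n : ℝ) / n) atTop (𝓝 (1 - α)) := by
  refine (tendsto_const_nhds.sub hp).congr' ?_
  filter_upwards [eventually_ne_atTop 0] with n hn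
  have hsum : (Nat.count p n : ℝ) + Nat.count (¬p ·) n = n := by
    exact_mod_cast Nat.count_add_count_not p n
  field_simp
  linarith

theorem tendsto_avgSeq_of_tendsto {a : ℕ → ℝ} {A : ℝ} (ha : Tendsto a atTop (𝓝 A)) :
    Tendsto (avgSeq a) atTop (𝓝 A) := by
  refine ha.cesaro.congr fun n => ?_
  rw [avgSeq, div_eq_inv_mul]

theorem div_mul_avgSeq (a : ℕ → ℝ) (k n : ℕ) :
    (k / n : ℝ) * avgSeq a k = (∑ i ∈ Finset.range k, a i) / n := by
  rcases eq_or_ne k 0 with rfl | hk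
  · simp
  · unfold avgSeq
    field_simp

section Merge

variable (p : ℕ → Prop) [DecidablePred p] (a b : ℕ → ℝ)

def mergeBy (m : ℕ) : ℝ :=
  if p m then a (Nat.count p m) else b (Nat.count (¬p ·) m)

theorem isMerge_mergeBy (hp : {m | p m}.Infinite) (hnp : {m | ¬p m}.Infinite) :
    IsMerge (mergeBy p a b) a b := by
  refine ⟨Nat.nth p, Nat.nth (¬p ·), Nat.nth_strictMono hp, Nat.nth_strictMono hnp, ?_, ?_,
    fun n => ?_, fun n => ?_⟩
  · rw [Nat.range_nth_of_infinite hp, Nat.range_nth_of_infinite hnp]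
    exact Set.disjoint_right.2 fun _ hm => hm
  · rw [Nat.range_nth_of_infinite hp, Nat.range_nth_of_infinite hnp]
    exact Set.union_compl_self _
  · rw [mergeBy, if_pos (Nat.nth_mem_of_infinite hp n), Nat.count_nth_of_infinite hp]
  · rw [mergeBy, if_neg (Nat.nth_mem_of_infinite hnp n), Nat.count_nth_of_infinite hnp]

theorem sum_range_mergeBy (n : ℕ) :
    ∑ i ∈ Finset.range n, mergeBy p a b i =
      ∑ j ∈ Finset.range (Nat.count p n), a j + ∑ j ∈ Finset.range (Nat.count (¬p ·) n), b j := by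
  induction n with
  | zero => simp
  | succ n ih =>
    rw [Finset.sum_range_succ, ih, Nat.count_succ, Nat.count_succ, mergeBy]
    by_cases h : p n
    · simp only [h, if_true, not_true_eq_false, if_false, add_zero, Finset.sum_range_succ]
      ring
    · simp only [h, if_false, not_false_eq_true, if_true, add_zero, Finset.sum_range_succ]
      ring

theorem avgSeq_mergeBy (n : ℕ) :
    avgSeq (mergeBy p a b) n =
      Nat.count p n / n * avgSeq a (Nat.count p n) +
        Nat.count (¬p ·) n / n * avgSeq b (Nat.count (¬p ·) n) := by
  rw [div_mul_avgSeq, div_mul_avgSeq, ← add_div, ← sum_range_mergeBy, avgSeq]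

variable {p a b}

theorem tendsto_avgSeq_mergeBy {A B α : ℝ} (ha : Tendsto a atTop (𝓝 A))
    (hb : Tendsto b atTop (𝓝 B))
    (hp : Tendsto (fun n => (Nat.count p n : ℝ) / n) atTop (𝓝 α))
    (hnp : Tendsto (fun n => (Nat.count (¬p ·) n : ℝ) / n) atTop (𝓝 (1 - α)))
    (hα0 : 0 < α) (hα1 : α < 1) :
    Tendsto (avgSeq (mergeBy p a b)) atTop (𝓝 (α * A + (1 - α) * B)) := by
  have hA := (tendsto_avgSeq_of_tendsto ha).comp (tendsto_atTop_of_tendsto_div_natCast hp hα0)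
  have hB := (tendsto_avgSeq_of_tendsto hb).comp
    (tendsto_atTop_of_tendsto_div_natCast hnp (sub_pos.2 hα1))
  exact ((hp.mul hA).add (hnp.mul hB)).congr fun n => (avgSeq_mergeBy p a b n).symm

end Merge

theorem stmt3_general (a b : ℕ → ℝ) (A B : ℝ) (ha : Tendsto a atTop (𝓝 A))
    (hb : Tendsto b atTop (𝓝 B))
    (α β : ℝ) (hα : 0 < α) (hβ : 0 < β) (hαβ : α + β = 1) :
    ∃ d : ℕ → ℝ, IsMerge d a b ∧ avgTendsTo d ((α * A + β * B : ℝ) : EReal) := by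
  obtain rfl : β = 1 - α := by linarith
  set p := fun m : ℕ => ⌊α * m⌋₊ < ⌊α * (m + 1 : ℕ)⌋₊
  have hp : Tendsto (fun n => (Nat.count p n : ℝ) / n) atTop (𝓝 α) := by
    simp only [p, Nat.count_floor_mul_lt_floor_mul_succ hα.le (by linarith)]
    exact (tendsto_nat_floor_mul_div_atTop hα.le).comp tendsto_natCast_atTop_atTop
  have hnp := tendsto_count_not_div_natCast hp
  have hinf := Nat.infinite_setOf_of_tendsto_count p (tendsto_atTop_of_tendsto_div_natCast hp hα)
  have hninf := Nat.infinite_setOf_of_tendsto_count (¬p ·)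
    (tendsto_atTop_of_tendsto_div_natCast hnp hβ)
  exact ⟨mergeBy p a b, isMerge_mergeBy p a b hinf hninf,
    EReal.tendsto_coe.2 (tendsto_avgSeq_mergeBy ha hb hp hnp hα (by linarith))⟩

/-- If `a_n → A`, `b_n → B` with `A < B` and `α, β > 0`, `α + β = 1`, then the
two sequences can be merged into a sequence tending to `αA + βB` in average. -/
theorem stmt3 (a b : ℕ → ℝ) (A B : ℝ) (ha : Tendsto a atTop (𝓝 A))
    (hb : Tendsto b atTop (𝓝 B)) (hAB : A < B)
    (α β : ℝ) (hα : 0 < α) (hβ : 0 < β) (hαβ : α + β = 1) :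
    ∃ d : ℕ → ℝ, IsMerge d a b ∧ avgTendsTo d ((α * A + β * B : ℝ) : EReal) :=
  stmt3_general a b A B ha hb α β hα hβ hαβ
end

section
/- Let (a_n) be a bounded real sequence. Then AAR_{(a_n)} equals the closed interval [liminf_{n→∞} a_n, limsup_{n→∞} a_n]. -/
/-!
A limit of the Cesàro means of a sequence lies between its `liminf` and `limsup`, and a
rearrangement does not change these. Conversely, if `liminf a ≤ x ≤ limsup a`, then for every
`δ > 0` there are infinitely many terms above `x - δ` and infinitely many below `x + δ`, so a
greedy rearrangement can keep the partial sums of `aₖ - x` small: while the sum is `≤ 0` take the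
first unused term above `x - 1/(n+1)`, otherwise the first unused term below `x + 1/(n+1)`. At
square steps `n` the first unused index is taken instead, which makes the rearrangement
surjective; squares have density zero, so these `O(√n)` uncontrolled steps disappear in the mean.
-/

open Filter Topology

open Finset

lemma avgSeq_add (u v : ℕ → ℝ) (n : ℕ) : avgSeq (u + v) n = avgSeq u n + avgSeq v n := by
  simp only [avgSeq, Pi.add_apply, sum_add_distrib, add_div]

lemma avgSeq_mono {u v : ℕ → ℝ} (h : u ≤ v) (n : ℕ) : avgSeq u n ≤ avgSeq v n :=
  div_le_div_of_nonneg_right (sum_le_sum fun i _ => h i) n.cast_nonneg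

lemma tendsto_avgSeq_of_tendsto_s4 {u : ℕ → ℝ} {l : ℝ} (h : Tendsto u atTop (𝓝 l)) :
    Tendsto (avgSeq u) atTop (𝓝 l) := by
  refine h.cesaro.congr fun n => ?_
  rw [avgSeq, div_eq_inv_mul]

section Cesaro

variable {b : ℕ → ℝ} {α : EReal}

lemma le_of_avgTendsTo_of_eventually_le {c : ℝ} (h : avgTendsTo b α)
    (hc : ∀ᶠ n in atTop, b n ≤ c) : α ≤ c := by
  have hmax : Tendsto (avgSeq fun n => max (b n) c) atTop (𝓝 c) :=
    tendsto_avgSeq_of_tendsto_s4 <|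
      tendsto_const_nhds.congr' <| hc.mono fun n hn => (max_eq_right hn).symm
  exact le_of_tendsto_of_tendsto' h (continuous_coe_real_ereal.continuousAt.tendsto.comp hmax)
    fun n => EReal.coe_le_coe_iff.2 <| avgSeq_mono (fun k => le_max_left _ _) n

lemma ge_of_avgTendsTo_of_eventually_ge {c : ℝ} (h : avgTendsTo b α)
    (hc : ∀ᶠ n in atTop, c ≤ b n) : (c : EReal) ≤ α := by
  have hmin : Tendsto (avgSeq fun n => min (b n) c) atTop (𝓝 c) :=
    tendsto_avgSeq_of_tendsto_s4 <|
      tendsto_const_nhds.congr' <| hc.mono fun n hn => (min_eq_right hn).symm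
  exact le_of_tendsto_of_tendsto' (continuous_coe_real_ereal.continuousAt.tendsto.comp hmin) h
    fun n => EReal.coe_le_coe_iff.2 <| avgSeq_mono (fun k => min_le_left _ _) n

lemma le_limsup_of_avgTendsTo (h : avgTendsTo b α) :
    α ≤ limsup (fun n => (b n : EReal)) atTop :=
  EReal.le_of_forall_lt_iff_le.1 fun _ hc => le_of_avgTendsTo_of_eventually_le h <|
    (eventually_lt_of_limsup_lt hc).mono fun _ hn => EReal.coe_le_coe_iff.1 hn.le

lemma liminf_le_of_avgTendsTo (h : avgTendsTo b α) :
    liminf (fun n => (b n : EReal)) atTop ≤ α :=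
  EReal.ge_of_forall_gt_iff_ge.1 fun _ hc => ge_of_avgTendsTo_of_eventually_ge h <|
    (eventually_lt_of_lt_liminf hc).mono fun _ hn => EReal.coe_le_coe_iff.1 hn.le

end Cesaro

lemma Nat.map_atTop_eq_of_bijective {p : ℕ → ℕ} (hp : p.Bijective) : map p atTop = atTop := by
  rw [← Nat.cofinite_eq_atTop]
  exact hp.injective.tendsto_cofinite.antisymm hp.surjective.le_map_cofinite

lemma AAR_subset_Icc (a : ℕ → ℝ) :
    AAR a ⊆
      Set.Icc (liminf (fun n => (a n : EReal)) atTop) (limsup (fun n => (a n : EReal)) atTop) := by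
  rintro α ⟨p, hp, h⟩
  have hlim := liminf_le_of_avgTendsTo h
  have hlim' := le_limsup_of_avgTendsTo h
  rw [← Function.comp_def (fun k => (a k : EReal)) p] at hlim hlim'
  rw [liminf_comp, Nat.map_atTop_eq_of_bijective hp] at hlim
  rw [limsup_comp, Nat.map_atTop_eq_of_bijective hp] at hlim'
  exact ⟨hlim, hlim'⟩

lemma Nat.count_isSquare_le (n : ℕ) : Nat.count IsSquare n ≤ n.sqrt + 1 := by
  rw [Nat.count_eq_card_filter_range]
  calc #{x ∈ range n | IsSquare x} ≤ #((range (n.sqrt + 1)).image fun j => j * j) :=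
        card_le_card fun x hx => by
          simp only [mem_filter, mem_range, mem_image] at hx ⊢
          obtain ⟨hxn, j, rfl⟩ := hx
          exact ⟨j, Nat.lt_succ_of_le (Nat.le_sqrt.2 hxn.le), rfl⟩
    _ ≤ n.sqrt + 1 := Finset.card_image_le.trans (card_range _).le

lemma Nat.tendsto_count_isSquare_div :
    Tendsto (fun n : ℕ => (Nat.count IsSquare n : ℝ) / n) atTop (𝓝 0) := by
  have h : Tendsto (fun n : ℕ => (√(n : ℝ))⁻¹ + 1 / n) atTop (𝓝 0) := by
    simpa using (tendsto_inv_atTop_zero.comp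
      (Real.tendsto_sqrt_atTop.comp tendsto_natCast_atTop_atTop)).add
      tendsto_one_div_atTop_nhds_zero_nat
  refine squeeze_zero (fun n => by positivity) (fun n => ?_) h
  have hcount : (Nat.count IsSquare n : ℝ) ≤ √(n : ℝ) + 1 :=
    calc (Nat.count IsSquare n : ℝ) ≤ n.sqrt + 1 := by exact_mod_cast Nat.count_isSquare_le n
      _ ≤ √(n : ℝ) + 1 := by gcongr; exact Real.nat_sqrt_le_real_sqrt
  calc (Nat.count IsSquare n : ℝ) / n ≤ (√(n : ℝ) + 1) / n := by gcongr
    _ = (√(n : ℝ))⁻¹ + 1 / n := by rw [add_div, Real.sqrt_div_self]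

namespace GreedyRearrangement

variable (d : ℕ → ℝ)

def Admissible (n : ℕ) (S : Finset ℕ) (k : ℕ) : Prop :=
  if IsSquare n then True
  else if ∑ j ∈ S, d j ≤ 0 then -(1 / ((n : ℝ) + 1)) < d k else d k < 1 / ((n : ℝ) + 1)

noncomputable def next (n : ℕ) (S : Finset ℕ) : ℕ :=
  sInf {k | k ∉ S ∧ Admissible d n S k}

noncomputable def used : ℕ → Finset ℕ
  | 0 => ∅
  | n + 1 => insert (next d n (used n)) (used n)

noncomputable def index (n : ℕ) : ℕ := next d n (used d n)

lemma used_succ (n : ℕ) : used d (n + 1) = insert (index d n) (used d n) := rfl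

lemma used_eq_image (n : ℕ) : used d n = (range n).image (index d) := by
  induction n with
  | zero => rfl
  | succ n ih => rw [used_succ, range_add_one, image_insert, ih]

variable {d}
variable (hpos : ∀ δ > 0, {k | -δ < d k}.Infinite) (hneg : ∀ δ > 0, {k | d k < δ}.Infinite)
include hpos hneg

lemma infinite_admissible (n : ℕ) (S : Finset ℕ) : {k | Admissible d n S k}.Infinite := by
  have hε : (0 : ℝ) < 1 / ((n : ℝ) + 1) := by positivity
  unfold Admissible
  split_ifs
  · simpa using Set.infinite_univ
  · exact hpos _ hε
  · exact hneg _ hε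

lemma index_spec (n : ℕ) : index d n ∉ used d n ∧ Admissible d n (used d n) (index d n) := by
  obtain ⟨k, hk, hkS⟩ := ((infinite_admissible hpos hneg n (used d n)).sdiff
    (used d n).finite_toSet).nonempty
  exact Nat.sInf_mem (s := {k | k ∉ used d n ∧ Admissible d n (used d n) k}) ⟨k, hkS, hk⟩

lemma index_injective : (index d).Injective := by
  intro i j hij
  by_contra hne
  wlog h : i < j generalizing i j
  · exact this hij.symm (Ne.symm hne) (by omega)
  refine (index_spec hpos hneg j).1 ?_
  rw [used_eq_image, ← hij]
  exact mem_image_of_mem _ (mem_range.2 h)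

/-- An index `m` that is never chosen would bound the first unused index at every square step,
so the injective map `j ↦ index (j * j)` would land in the finite set `Iic m`. -/
lemma index_surjective : (index d).Surjective := by
  intro m
  by_contra! hm
  have hle : ∀ j, index d (j * j) ∈ Set.Iic m := fun j => by
    refine Nat.sInf_le ⟨fun hmem => ?_, ?_⟩
    · obtain ⟨i, -, hi⟩ := mem_image.1 (used_eq_image d (j * j) ▸ hmem)
      exact hm i hi
    · rw [Admissible, if_pos ⟨j, rfl⟩]
      trivial
  have hinj : Function.Injective fun j => index d (j * j) := fun i j hij =>
    Nat.mul_self_inj.1 (index_injective hpos hneg hij)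
  exact Set.infinite_of_injective_forall_mem hinj hle (Set.finite_Iic m)

lemma sum_range_index (n : ℕ) : ∑ i ∈ range n, d (index d i) = ∑ k ∈ used d n, d k := by
  rw [used_eq_image, sum_image fun _ _ _ _ h => index_injective hpos hneg h]

lemma abs_sum_used_le {C : ℝ} (hC : ∀ k, |d k| ≤ C) (n : ℕ) :
    |∑ k ∈ used d n, d k| ≤
      C * (Nat.count IsSquare n + 1) + ∑ i ∈ range n, 1 / ((i : ℝ) + 1) := by
  have hC0 : 0 ≤ C := (abs_nonneg _).trans (hC 0)
  induction n with
  | zero => simpa [used] using hC0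
  | succ n ih =>
    obtain ⟨hfresh, hadm⟩ := index_spec hpos hneg n
    have hε : 0 < 1 / ((n : ℝ) + 1) := by positivity
    have hE : 0 ≤ ∑ i ∈ range n, 1 / ((i : ℝ) + 1) := sum_nonneg fun i _ => by positivity
    have hcount : 0 ≤ C * Nat.count IsSquare n := mul_nonneg hC0 (Nat.cast_nonneg _)
    obtain ⟨hdl, hdu⟩ := abs_le.1 (hC (index d n))
    obtain ⟨ihl, ihu⟩ := abs_le.1 ih
    rw [used_succ, sum_insert hfresh, Nat.count_succ, sum_range_succ, abs_le]
    unfold Admissible at hadm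
    -- the bound is at least `C`, so a greedy step overshoots past `0` by at most `C`
    split_ifs at hadm ⊢ <;> push_cast <;> constructor <;> linarith

lemma tendsto_avgSeq_index {C : ℝ} (hC : ∀ k, |d k| ≤ C) :
    Tendsto (avgSeq (d ∘ index d)) atTop (𝓝 0) := by
  have hE : Tendsto (fun n : ℕ => (∑ i ∈ range n, 1 / ((i : ℝ) + 1)) / n) atTop (𝓝 0) := by
    simpa only [div_eq_inv_mul] using tendsto_one_div_add_atTop_nhds_zero_nat.cesaro
  have hbound : Tendsto (fun n : ℕ => C * ((Nat.count IsSquare n : ℝ) / n) + C * (1 / n) +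
      (∑ i ∈ range n, 1 / ((i : ℝ) + 1)) / n) atTop (𝓝 0) := by
    simpa using ((Nat.tendsto_count_isSquare_div.const_mul C).add
      (tendsto_one_div_atTop_nhds_zero_nat.const_mul C)).add hE
  refine squeeze_zero_norm (fun n => ?_) hbound
  rw [Real.norm_eq_abs, avgSeq, Function.comp_def, sum_range_index hpos hneg, abs_div,
    Nat.abs_cast]
  calc _ ≤ (C * (Nat.count IsSquare n + 1) + ∑ i ∈ range n, 1 / ((i : ℝ) + 1)) / n :=
        div_le_div_of_nonneg_right (abs_sum_used_le hpos hneg hC n) n.cast_nonneg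
    _ = _ := by ring

end GreedyRearrangement

theorem exists_bijective_tendsto_avgSeq_zero {d : ℕ → ℝ} {C : ℝ} (hC : ∀ k, |d k| ≤ C)
    (hpos : ∀ δ > 0, {k | -δ < d k}.Infinite) (hneg : ∀ δ > 0, {k | d k < δ}.Infinite) :
    ∃ p : ℕ → ℕ, p.Bijective ∧ Tendsto (avgSeq (d ∘ p)) atTop (𝓝 0) :=
  open GreedyRearrangement in
  ⟨index d, ⟨index_injective hpos hneg, index_surjective hpos hneg⟩,
    tendsto_avgSeq_index hpos hneg hC⟩

lemma infinite_setOf_lt_of_lt_limsup {u : ℕ → ℝ} {c : ℝ}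
    (h : (c : EReal) < limsup (fun n => (u n : EReal)) atTop) : {n | c < u n}.Infinite :=
  Nat.frequently_atTop_iff_infinite.1 <|
    (frequently_lt_of_lt_limsup (by isBoundedDefault) h).mono fun _ => EReal.coe_lt_coe_iff.1

lemma infinite_setOf_lt_of_liminf_lt {u : ℕ → ℝ} {c : ℝ}
    (h : liminf (fun n => (u n : EReal)) atTop < c) : {n | u n < c}.Infinite :=
  Nat.frequently_atTop_iff_infinite.1 <|
    (frequently_lt_of_liminf_lt (by isBoundedDefault) h).mono fun _ => EReal.coe_lt_coe_iff.1

lemma coe_mem_AAR {a : ℕ → ℝ} {M : ℝ} (hM : ∀ n, |a n| ≤ M) {x : ℝ}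
    (hx : (x : EReal) ∈ Set.Icc (liminf (fun n => (a n : EReal)) atTop)
      (limsup (fun n => (a n : EReal)) atTop)) : (x : EReal) ∈ AAR a := by
  have hpos : ∀ δ > 0, {k | -δ < a k - x}.Infinite := fun δ hδ =>
    (infinite_setOf_lt_of_lt_limsup <|
        (EReal.coe_lt_coe_iff.2 (sub_lt_self x hδ)).trans_le hx.2).mono
      fun k (hk : x - δ < a k) => show -δ < a k - x by linarith
  have hneg : ∀ δ > 0, {k | a k - x < δ}.Infinite := fun δ hδ =>
    (infinite_setOf_lt_of_liminf_lt <|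
        hx.1.trans_lt (EReal.coe_lt_coe_iff.2 (lt_add_of_pos_right x hδ))).mono
      fun k (hk : a k < x + δ) => show a k - x < δ by linarith
  have hC : ∀ k, |a k - x| ≤ M + |x| := fun k => (abs_sub _ _).trans (by linarith [hM k])
  obtain ⟨p, hp, hlim⟩ := exists_bijective_tendsto_avgSeq_zero hC hpos hneg
  refine ⟨p, hp, EReal.tendsto_coe.2 ?_⟩
  convert hlim.add (tendsto_avgSeq_of_tendsto_s4 (tendsto_const_nhds (x := x))) using 1
  · ext n
    rw [← avgSeq_add]
    congr 1
    ext k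
    simp
  · rw [zero_add]

/-- For a bounded real sequence, the set of points accessible in average by
rearrangement is exactly the interval `[liminf aₙ, limsup aₙ]` in `ℝ̄`. -/
theorem stmt4 (a : ℕ → ℝ) (hbd : ∃ M : ℝ, ∀ n, |a n| ≤ M) :
    AAR a = Set.Icc (liminf (fun n => ((a n : ℝ) : EReal)) atTop)
      (limsup (fun n => ((a n : ℝ) : EReal)) atTop) := by
  obtain ⟨M, hM⟩ := hbd
  refine (AAR_subset_Icc a).antisymm fun α hα => ?_
  have hU : limsup (fun n => (a n : EReal)) atTop ≤ M :=
    limsup_le_of_le (by isBoundedDefault) <| Eventually.of_forall fun n =>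
      EReal.coe_le_coe_iff.2 (le_abs_self _ |>.trans (hM n))
  have hL : ((-M : ℝ) : EReal) ≤ liminf (fun n => (a n : EReal)) atTop :=
    le_liminf_of_le (by isBoundedDefault) <| Eventually.of_forall fun n =>
      EReal.coe_le_coe_iff.2 (neg_le_of_abs_le (hM n))
  lift α to ℝ using ⟨ne_top_of_le_ne_top (EReal.coe_ne_top M) (hα.2.trans hU),
    ne_bot_of_le_ne_bot (EReal.coe_ne_bot _) (hL.trans hα.1)⟩
  exact coe_mem_AAR hM hα
end

section
/- Let (c_n) be a monotone nondecreasing sequence of positive reals with c_n → +∞, and let (c'_n) be any rearrangement of (c_n) (i.e. c'_n = c_{p(n)} for a bijection p : ℕ → ℕ). Then limsup_{n→∞} c_n / (c_1 + ⋯ + c_{n-1}) ≤ limsup_{n→∞} c'_n / (c'_1 + ⋯ + c'_{n-1}). -/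
/-!
For each `n`, let `m` be the first index at which the rearrangement `p` takes a value `≥ n`.
Then `c (p m) ≥ c n` by monotonicity, while `c (p 0), …, c (p (m-1))` are distinct terms
`c i` with `i < n`, so their sum is at most `c 0 + ⋯ + c (n-1)`. Hence the `n`-th ratio of `c`
is bounded by the `m`-th ratio of the rearrangement, and `m → ∞` as `n → ∞`.
-/

open Filter Topology

open Finset

theorem Filter.limsup_le_limsup_of_eventually_le_comp {α β γ : Type*} [CompleteLattice β]
    {u : α → β} {v : γ → β} {f : α → γ} {l : Filter α} {l' : Filter γ}
    (hf : Tendsto f l l') (h : u ≤ᶠ[l] v ∘ f) : limsup u l ≤ limsup v l' :=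
  calc limsup u l ≤ limsup (v ∘ f) l := limsup_le_limsup h
    _ = limsup v (map f l) := limsup_comp v f l
    _ ≤ limsup v l' := limsup_le_limsup_of_le hf

theorem Finset.sum_range_comp_le_sum_range {M : Type*} [AddCommMonoid M] [PartialOrder M]
    [IsOrderedAddMonoid M] {c : ℕ → M} (hc : ∀ n, 0 ≤ c n) {p : ℕ → ℕ}
    (hp : Function.Injective p) {m n : ℕ} (h : ∀ i < m, p i < n) :
    ∑ i ∈ range m, c (p i) ≤ ∑ i ∈ range n, c i := by
  rw [← sum_image fun _ _ _ _ hij => hp hij]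
  refine sum_le_sum_of_subset_of_nonneg ?_ fun j _ _ => hc j
  intro j hj
  obtain ⟨i, hi, rfl⟩ := mem_image.1 hj
  exact mem_range.2 (h i (mem_range.1 hi))

theorem div_sum_range_le_div_sum_range_comp {K : Type*} [Field K] [LinearOrder K]
    [IsStrictOrderedRing K] {c : ℕ → K} (hpos : ∀ n, 0 < c n)
    (hmono : Monotone c) {p : ℕ → ℕ} (hp : Function.Injective p) {m n : ℕ} (hm : 0 < m)
    (hlt : ∀ i < m, p i < n) (hle : n ≤ p m) :
    c n / ∑ i ∈ range n, c i ≤ c (p m) / ∑ i ∈ range m, c (p i) :=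
  div_le_div₀ (hpos _).le (hmono hle) (sum_pos (fun _ _ => hpos _) (nonempty_range_iff.2 hm.ne'))
    (sum_range_comp_le_sum_range (fun i => (hpos i).le) hp hlt)

section FirstHit

variable {p : ℕ → ℕ} (hp : ∀ n, ∃ k, n ≤ p k)

noncomputable def firstHit (n : ℕ) : ℕ := Nat.find (hp n)

theorem le_apply_firstHit (n : ℕ) : n ≤ p (firstHit hp n) :=
  Nat.find_spec (hp n)

theorem apply_lt_of_lt_firstHit {n i : ℕ} (hi : i < firstHit hp n) : p i < n :=
  lt_of_not_ge (Nat.find_min (hp n) hi)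

theorem firstHit_pos {n : ℕ} (hn : p 0 < n) : 0 < firstHit hp n :=
  Nat.pos_of_ne_zero fun h => hn.not_ge (h ▸ le_apply_firstHit hp n)

theorem tendsto_firstHit : Tendsto (firstHit hp) atTop atTop := by
  refine tendsto_atTop_atTop.2 fun b => ⟨(range b).sup p + 1, fun n hn => ?_⟩
  refine (Nat.le_find_iff _ _).2 fun k hk hkn => ?_
  have : p k ≤ (range b).sup p := le_sup (mem_range.2 hk)
  omega

end FirstHit

theorem stmt6_general (c : ℕ → ℝ) (hpos : ∀ n, 0 < c n) (hmono : Monotone c)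
    (p : ℕ → ℕ) (hp : Function.Bijective p) :
    limsup (fun n => ((c n / ∑ i ∈ Finset.range n, c i : ℝ) : EReal)) atTop ≤
      limsup (fun n => ((c (p n) / ∑ i ∈ Finset.range n, c (p i) : ℝ) : EReal)) atTop := by
  have hunbdd : ∀ n, ∃ k, n ≤ p k := fun n => (hp.2 n).imp fun _ hk => hk.ge
  refine limsup_le_limsup_of_eventually_le_comp (tendsto_firstHit hunbdd) ?_
  filter_upwards [eventually_gt_atTop (p 0)] with n hn
  exact EReal.coe_le_coe_iff.2 <| div_sum_range_le_div_sum_range_comp hpos hmono hp.1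
    (firstHit_pos hunbdd hn) (fun _ => apply_lt_of_lt_firstHit hunbdd) (le_apply_firstHit hunbdd n)

/-- For a nondecreasing sequence of positive reals tending to `+∞` and any of
its rearrangements, `limsup cₙ / (c₁ + ⋯ + c₍ₙ₋₁₎) ≤
limsup c'ₙ / (c'₁ + ⋯ + c'₍ₙ₋₁₎)` (limsups in the extended reals). -/
theorem stmt6 (c : ℕ → ℝ) (hpos : ∀ n, 0 < c n) (hmono : Monotone c)
    (htop : Tendsto c atTop atTop) (p : ℕ → ℕ) (hp : Function.Bijective p) :
    limsup (fun n => ((c n / ∑ i ∈ Finset.range n, c i : ℝ) : EReal)) atTop ≤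
      limsup (fun n => ((c (p n) / ∑ i ∈ Finset.range n, c (p i) : ℝ) : EReal)) atTop :=
  stmt6_general c hpos hmono p hp
end

section
/- Let (c_n) be a sequence of positive reals with c_n → +∞ and c_n / (c_1 + ⋯ + c_{n-1}) → 0. If (c'_n) is a rearrangement of (c_n) (i.e. c'_n = c_{p(n)} for a bijection p : ℕ → ℕ) that is monotone nondecreasing, then c'_n / (c'_1 + ⋯ + c'_{n-1}) → 0. -/
/-!
Let `m n` be the least index not among `p 0, …, p (n - 1)`. All of `c 0, …, c (m n - 1)` occur
among the first `n` terms of the rearrangement, while `c (m n)` occurs at a position `≥ n`, so by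
monotonicity `c (p n) ≤ c (m n)` and `∑_{i < m n} c i ≤ ∑_{i < n} c (p i)`. Hence the ratio of the
rearrangement at `n` is bounded by the ratio of `c` at `m n`, and `m n → ∞` when `p` is surjective.
-/

open Filter Topology

open Finset

noncomputable def leastUnattained (p : ℕ → ℕ) (n : ℕ) : ℕ :=
  sInf ((↑((range n).image p) : Set ℕ)ᶜ)

section leastUnattained

variable {p : ℕ → ℕ} {n : ℕ}

lemma leastUnattained_notMem_image : leastUnattained p n ∉ (range n).image p :=
  Nat.sInf_mem (s := (↑((range n).image p) : Set ℕ)ᶜ) (Infinite.exists_notMem_finset _)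

lemma range_leastUnattained_subset_image : range (leastUnattained p n) ⊆ (range n).image p :=
  fun _ hi => not_not.1 (Nat.notMem_of_lt_sInf (mem_range.1 hi))

lemma le_of_apply_eq_leastUnattained {k : ℕ} (hk : p k = leastUnattained p n) : n ≤ k := by
  by_contra! hkn
  exact leastUnattained_notMem_image (mem_image.2 ⟨k, mem_range.2 hkn, hk⟩)

lemma tendsto_leastUnattained (hp : p.Surjective) : Tendsto (leastUnattained p) atTop atTop := by
  refine tendsto_atTop.2 fun L => ?_
  have hcover : ∀ᶠ n in atTop, ∀ i ∈ range L, i ∈ (range n).image p :=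
    (eventually_all_finset _).2 fun i _ => by
      obtain ⟨k, rfl⟩ := hp i
      filter_upwards [eventually_gt_atTop k] with n hkn
      exact mem_image_of_mem p (mem_range.2 hkn)
  filter_upwards [hcover] with n hn
  by_contra! hlt
  exact leastUnattained_notMem_image (hn _ (mem_range.2 hlt))

variable {α : Type*}

lemma sum_range_leastUnattained_le [AddCommMonoid α] [PartialOrder α] [IsOrderedAddMonoid α]
    {c : ℕ → α} (hc : ∀ i, 0 ≤ c i) (hp : p.Injective) :
    ∑ i ∈ range (leastUnattained p n), c i ≤ ∑ i ∈ range n, c (p i) :=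
  calc ∑ i ∈ range (leastUnattained p n), c i
      ≤ ∑ i ∈ (range n).image p, c i :=
        sum_le_sum_of_subset_of_nonneg range_leastUnattained_subset_image fun i _ _ => hc i
    _ = ∑ i ∈ range n, c (p i) := sum_image fun _ _ _ _ h => hp h

lemma apply_le_apply_leastUnattained [Preorder α] {c : ℕ → α} (hp : p.Surjective)
    (hmono : Monotone (fun n => c (p n))) : c (p n) ≤ c (leastUnattained p n) := by
  obtain ⟨k, hk⟩ := hp (leastUnattained p n)
  simpa only [hk] using hmono (le_of_apply_eq_leastUnattained hk)

end leastUnattained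

lemma ratio_le_ratio_leastUnattained {c : ℕ → ℝ} (hpos : ∀ n, 0 < c n) {p : ℕ → ℕ}
    (hp : p.Bijective) (hmono : Monotone (fun n => c (p n))) {n : ℕ}
    (hn : 0 < leastUnattained p n) :
    c (p n) / ∑ i ∈ range n, c (p i) ≤
      c (leastUnattained p n) / ∑ i ∈ range (leastUnattained p n), c i :=
  div_le_div₀ (hpos _).le (apply_le_apply_leastUnattained hp.2 hmono)
    (sum_pos (fun i _ => hpos i) (nonempty_range_iff.2 hn.ne'))
    (sum_range_leastUnattained_le (fun i => (hpos i).le) hp.1)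

theorem stmt7_general (c : ℕ → ℝ) (hpos : ∀ n, 0 < c n)
    (hbal : Tendsto (fun n => c n / ∑ i ∈ Finset.range n, c i) atTop (𝓝 0))
    (p : ℕ → ℕ) (hp : Function.Bijective p) (hmono : Monotone (fun n => c (p n))) :
    Tendsto (fun n => c (p n) / ∑ i ∈ Finset.range n, c (p i)) atTop (𝓝 0) := by
  have hm := tendsto_leastUnattained hp.2
  refine tendsto_of_tendsto_of_tendsto_of_le_of_le' tendsto_const_nhds (hbal.comp hm)
    (Eventually.of_forall fun n => ?_) ?_
  · exact div_nonneg (hpos _).le (sum_nonneg fun i _ => (hpos _).le)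
  · filter_upwards [hm.eventually_gt_atTop 0] with n hn
    exact ratio_le_ratio_leastUnattained hpos hp hmono hn

/-- If a sequence of positive reals tending to `+∞` is balanced, i.e.
`cₙ / (c₁ + ⋯ + c₍ₙ₋₁₎) → 0`, then so is any nondecreasing rearrangement of it. -/
theorem stmt7 (c : ℕ → ℝ) (hpos : ∀ n, 0 < c n) (htop : Tendsto c atTop atTop)
    (hbal : Tendsto (fun n => c n / ∑ i ∈ Finset.range n, c i) atTop (𝓝 0))
    (p : ℕ → ℕ) (hp : Function.Bijective p) (hmono : Monotone (fun n => c (p n))) :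
    Tendsto (fun n => c (p n) / ∑ i ∈ Finset.range n, c (p i)) atTop (𝓝 0) :=
  stmt7_general c hpos hbal p hp hmono
end

section
/- Let (a_n) = (b_n)||(c_n), where b_n ≡ 0 and (c_n) is a sequence of positive reals with c_n → +∞. If c_n / (c_1 + ⋯ + c_{n-1}) → 0 as n → ∞, then 1 ∈ AAR_{(a_n)}, i.e. 1 is accessible in average by rearrangement of (a_n). -/
open Filter Topology

/-!
Put `c k` at position `slot c k = ⌈c 0 + ⋯ + c (k-1)⌉ + 2k` and zeros everywhere else. Consecutive
slots are at least two apart, so infinitely many zeros are left over and the placement is realised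
by a rearrangement of `0 || c`. If `K` terms of `c` occupy the first `N` positions, then
`slot c (K-1) < N ≤ slot c K` and the mean is `S K / N`, where `S k = c 0 + ⋯ + c (k-1)`.
Since `c → ∞`, `S k / k → ∞` (Cesàro), so `slot c k / S k → 1`; and `c k / S k → 0` means
`S (k+1) / S k → 1`. Squeezing gives `S K / N → 1`.
-/

open Finset Function

theorem interleave_natSumNatEquivNat (b c : ℕ → ℝ) (x : ℕ ⊕ ℕ) :
    interleave b c (Equiv.natSumNatEquivNat x) = Sum.elim b c x := by
  rcases x with k | k <;> simp [interleave, Nat.mul_add_div]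

theorem exists_equiv_interleave_apply_eq (b c : ℕ → ℝ) {f : ℕ → ℕ} (hf : Injective f)
    (hf' : (Set.range f)ᶜ.Infinite) :
    ∃ p : ℕ ≃ ℕ, (∀ k, interleave b c (p (f k)) = c k) ∧
      ∀ x ∉ Set.range f, interleave b c (p x) ∈ Set.range b := by
  classical
  have : Infinite ↥(Set.range f)ᶜ := hf'.to_subtype
  have : Denumerable ↥(Set.range f)ᶜ := Nat.Subtype.denumerable _
  let p : ℕ ≃ ℕ := (Equiv.Set.sumCompl (Set.range f)).symm.trans
    (((Equiv.ofInjective f hf).symm.sumCongr (Denumerable.eqv _)).trans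
      ((Equiv.sumComm _ _).trans Equiv.natSumNatEquivNat))
  refine ⟨p, fun k => ?_, fun x hx => ?_⟩
  · simp only [p, Equiv.trans_apply, Equiv.Set.sumCompl_symm_apply_of_mem (Set.mem_range_self k),
      Equiv.sumCongr_apply, Sum.map_inl, Equiv.ofInjective_symm_apply, Equiv.sumComm_apply,
      Sum.swap_inl, interleave_natSumNatEquivNat, Sum.elim_inr]
  · simp only [p, Equiv.trans_apply, Equiv.Set.sumCompl_symm_apply_of_notMem hx,
      Equiv.sumCongr_apply, Sum.map_inr, Equiv.sumComm_apply, Sum.swap_inr,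
      interleave_natSumNatEquivNat, Sum.elim_inl, Set.mem_range_self]

noncomputable def countBelow (f : ℕ → ℕ) (N : ℕ) : ℕ := sInf {k | N ≤ f k}

section countBelow

variable {f : ℕ → ℕ} (hf : StrictMono f)
include hf

theorem lt_countBelow_iff {k N : ℕ} : k < countBelow f N ↔ f k < N := by
  unfold countBelow
  refine ⟨fun hk => not_le.1 (Nat.notMem_of_lt_sInf (s := {k | N ≤ f k}) hk),
    fun hk => not_le.1 fun h => ?_⟩
  have hmem : N ≤ f (sInf {k | N ≤ f k}) := Nat.sInf_mem (s := {k | N ≤ f k}) ⟨N, hf.id_le N⟩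
  exact (hmem.trans (hf.monotone h)).not_gt hk

theorem le_apply_countBelow (N : ℕ) : N ≤ f (countBelow f N) :=
  not_lt.1 fun h => (lt_irrefl _) ((lt_countBelow_iff hf).2 h)

theorem tendsto_countBelow_atTop : Tendsto (countBelow f) atTop atTop :=
  tendsto_atTop.2 fun k => (eventually_gt_atTop (f k)).mono fun _ hN =>
    ((lt_countBelow_iff hf).2 hN).le

theorem sum_range_eq_sum_range_countBelow {q c : ℕ → ℝ} (hq : ∀ k, q (f k) = c k)
    (hq₀ : ∀ x ∉ Set.range f, q x = 0) (N : ℕ) :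
    ∑ i ∈ range N, q i = ∑ k ∈ range (countBelow f N), c k := by
  have hsub : (range (countBelow f N)).image f ⊆ range N := by
    simp only [subset_iff, mem_image, mem_range]
    rintro _ ⟨k, hk, rfl⟩
    exact (lt_countBelow_iff hf).1 hk
  rw [← sum_subset hsub, sum_image hf.injective.injOn]
  · exact sum_congr rfl fun k _ => hq k
  · rintro x hxN hx
    refine hq₀ x fun ⟨k, hk⟩ => hx (mem_image.2 ⟨k, ?_, hk⟩)
    exact mem_range.2 ((lt_countBelow_iff hf).2 (hk ▸ mem_range.1 hxN))

theorem tendsto_div_countBelow {u : ℕ → ℝ} (hu : ∀ k, 0 ≤ u k)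
    (h₀ : Tendsto (fun k => u k / f k) atTop (𝓝 1))
    (h₁ : Tendsto (fun k => u (k + 1) / f k) atTop (𝓝 1)) :
    Tendsto (fun N => u (countBelow f N) / N) atTop (𝓝 1) := by
  have hK := tendsto_countBelow_atTop hf
  have h₁' : Tendsto (fun k => u k / f (k - 1)) atTop (𝓝 1) :=
    (h₁.comp (tendsto_sub_atTop_nat 1)).congr' <|
      (eventually_ge_atTop 1).mono fun k hk => by simp [Nat.sub_add_cancel hk]
  refine tendsto_of_tendsto_of_tendsto_of_le_of_le' (h₀.comp hK) (h₁'.comp hK) ?_ ?_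
  · filter_upwards [eventually_ge_atTop 1] with N hN
    exact div_le_div_of_nonneg_left (hu _) (by exact_mod_cast hN)
      (by exact_mod_cast le_apply_countBelow hf N)
  · filter_upwards [hK.eventually_ge_atTop 2] with N hN
    have hlt : f (countBelow f N - 1) < N := (lt_countBelow_iff hf).1 (by omega)
    have hpos : 0 < f (countBelow f N - 1) :=
      lt_of_lt_of_le (by omega : 0 < countBelow f N - 1) (hf.id_le _)
    exact div_le_div_of_nonneg_left (hu _) (by exact_mod_cast hpos) (by exact_mod_cast hlt.le)

end countBelow

theorem tendsto_sum_range_div_atTop {c : ℕ → ℝ} (h : Tendsto c atTop atTop) :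
    Tendsto (fun k => (∑ i ∈ range k, c i) / k) atTop atTop := by
  refine tendsto_atTop.2 fun M => ?_
  have hmin : Tendsto (fun i => min (c i) (M + 1)) atTop (𝓝 (M + 1)) :=
    tendsto_const_nhds.congr' <| (h.eventually_ge_atTop (M + 1)).mono fun i hi =>
      (min_eq_right hi).symm
  filter_upwards [hmin.cesaro.eventually (eventually_ge_nhds (lt_add_one M))] with k hk
  rw [div_eq_inv_mul]
  exact hk.trans (by gcongr; exact min_le_left _ _)

noncomputable def slot (c : ℕ → ℝ) (k : ℕ) : ℕ := ⌈∑ i ∈ range k, c i⌉₊ + 2 * k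

section slot

variable {c : ℕ → ℝ}

theorem slot_add_two_le (hc : ∀ n, 0 ≤ c n) (k : ℕ) : slot c k + 2 ≤ slot c (k + 1) := by
  have : ⌈∑ i ∈ range k, c i⌉₊ ≤ ⌈∑ i ∈ range (k + 1), c i⌉₊ :=
    Nat.ceil_mono (by rw [sum_range_succ]; linarith [hc k])
  simp only [slot]
  omega

theorem slot_strictMono (hc : ∀ n, 0 ≤ c n) : StrictMono (slot c) :=
  strictMono_nat_of_lt_succ fun k => by linarith [slot_add_two_le hc k]

theorem infinite_compl_range_slot (hc : ∀ n, 0 ≤ c n) : (Set.range (slot c))ᶜ.Infinite := by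
  have hmono := (slot_strictMono hc).monotone
  refine Set.infinite_of_forall_exists_gt fun k => ⟨slot c k + 1, ?_, ?_⟩
  · rintro ⟨j, hj⟩
    rcases le_or_gt j k with h | h
    · linarith [hmono h]
    · linarith [hmono (Nat.succ_le_of_lt h), slot_add_two_le hc k]
  · exact Nat.lt_succ_of_le ((slot_strictMono hc).id_le k)

theorem sum_range_le_slot (k : ℕ) : ∑ i ∈ range k, c i ≤ slot c k := by
  have := Nat.le_ceil (∑ i ∈ range k, c i)
  simp only [slot]
  push_cast
  linarith

theorem slot_le (hc : ∀ n, 0 ≤ c n) (k : ℕ) : (slot c k : ℝ) ≤ ∑ i ∈ range k, c i + 2 * k + 1 := by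
  have := Nat.ceil_lt_add_one (sum_nonneg fun i (_ : i ∈ range k) => hc i)
  simp only [slot]
  push_cast
  linarith

theorem sum_range_pos (hc : ∀ n, 0 < c n) {k : ℕ} (hk : 1 ≤ k) : 0 < ∑ i ∈ range k, c i :=
  sum_pos (fun i _ => hc i) (nonempty_range_iff.2 (by omega))

theorem tendsto_sum_div_slot (hc : ∀ n, 0 < c n) (htop : Tendsto c atTop atTop) :
    Tendsto (fun k => (∑ i ∈ range k, c i) / slot c k) atTop (𝓝 1) := by
  have hk : Tendsto (fun k : ℕ => (k : ℝ) / ∑ i ∈ range k, c i) atTop (𝓝 0) :=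
    (tendsto_sum_range_div_atTop htop).inv_tendsto_atTop.congr fun k => inv_div _ _
  have hup : Tendsto (fun k : ℕ => 1 + 3 * ((k : ℝ) / ∑ i ∈ range k, c i)) atTop (𝓝 1) := by
    simpa using tendsto_const_nhds.add (hk.const_mul 3)
  have hslot : Tendsto (fun k => (slot c k : ℝ) / ∑ i ∈ range k, c i) atTop (𝓝 1) := by
    refine tendsto_of_tendsto_of_tendsto_of_le_of_le' tendsto_const_nhds hup ?_ ?_ <;>
      filter_upwards [eventually_ge_atTop 1] with k hk
    · rw [le_div_iff₀ (sum_range_pos hc hk), one_mul]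
      exact sum_range_le_slot k
    · have hS := sum_range_pos hc hk
      have hk' : (1 : ℝ) ≤ k := by exact_mod_cast hk
      rw [mul_div_assoc', one_add_div hS.ne', div_le_div_iff_of_pos_right hS]
      linarith [slot_le (fun n => (hc n).le) k]
  simpa only [Pi.inv_apply, inv_div, inv_one] using hslot.inv₀ one_ne_zero

theorem tendsto_sum_succ_div_slot (hc : ∀ n, 0 < c n) (htop : Tendsto c atTop atTop)
    (hbal : Tendsto (fun n => c n / ∑ i ∈ range n, c i) atTop (𝓝 0)) :
    Tendsto (fun k => (∑ i ∈ range (k + 1), c i) / slot c k) atTop (𝓝 1) := by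
  have h := ((tendsto_const_nhds (x := (1 : ℝ))).add hbal).mul (tendsto_sum_div_slot hc htop)
  rw [add_zero, one_mul] at h
  refine h.congr' ((eventually_ge_atTop 1).mono fun k hk => ?_)
  have hS := (sum_range_pos hc hk).ne'
  simp only [sum_range_succ]
  field_simp

end slot

/-- For `(a_n) = (0)||(c_n)` with `c_n > 0`, `c_n → +∞` and
`cₙ / (c₁ + ⋯ + c₍ₙ₋₁₎) → 0`, the point `1` is accessible in average by
rearrangement of `(a_n)`. -/
theorem stmt8 (c : ℕ → ℝ) (hpos : ∀ n, 0 < c n) (htop : Tendsto c atTop atTop)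
    (hbal : Tendsto (fun n => c n / ∑ i ∈ Finset.range n, c i) atTop (𝓝 0)) :
    (1 : EReal) ∈ AAR (interleave (fun _ => 0) c) := by
  have hc : ∀ n, 0 ≤ c n := fun n => (hpos n).le
  obtain ⟨p, hp, hp₀⟩ := exists_equiv_interleave_apply_eq (fun _ => 0) c
    (slot_strictMono hc).injective (infinite_compl_range_slot hc)
  have hsum := sum_range_eq_sum_range_countBelow (slot_strictMono hc) hp fun x hx => by
    obtain ⟨_, h⟩ := hp₀ x hx
    exact h.symm
  refine ⟨p, p.bijective, ?_⟩
  simp only [avgTendsTo, avgSeq, hsum, ← EReal.coe_one, EReal.tendsto_coe]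
  exact tendsto_div_countBelow (slot_strictMono hc) (fun k => sum_nonneg fun i _ => hc i)
    (tendsto_sum_div_slot hpos htop) (tendsto_sum_succ_div_slot hpos htop hbal)
end

section
/- Let (a_n) = (b_n)||(c_n), where b_n ≡ 0 and (c_n) is a monotone nondecreasing sequence of positive reals with c_n → +∞. If 1 ∈ AAR_{(a_n)}, i.e. 1 is accessible in average by rearrangement of (a_n), then c_n / (c_1 + ⋯ + c_{n-1}) → 0 as n → ∞. -/
open Filter Topology

/-!
If the means of a sequence `x` (here the rearrangement) converge to `1`, then
`x N = o(N) = o(x 0 + ⋯ + x (N - 1))`. Run through the rearrangement until the first term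
`≥ c n` appears, at position `N`: every earlier nonzero term is a distinct `c j` with `j < n`
(by monotonicity), so the partial sum before position `N` is at most `c 0 + ⋯ + c (n - 1)`,
whence `c n / (c 0 + ⋯ + c (n - 1)) ≤ x N / (x 0 + ⋯ + x (N - 1))`. Since `c n → ∞`, also
`N → ∞`, and the right-hand side tends to `0`.
-/

open Finset

theorem natCast_mul_avgSeq (x : ℕ → ℝ) (N : ℕ) :
    (N : ℝ) * avgSeq x N = ∑ i ∈ range N, x i := by
  rcases eq_or_ne N 0 with rfl | hN
  · simp
  · rw [avgSeq, mul_div_cancel₀ _ (Nat.cast_ne_zero.2 hN)]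

/-- With `A` the means of `x`, `x N / N = A (N + 1) - A N + A (N + 1) / N`. -/
theorem tendsto_div_natCast_of_tendsto_avgSeq {x : ℕ → ℝ} {L : ℝ}
    (h : Tendsto (avgSeq x) atTop (𝓝 L)) : Tendsto (fun N => x N / N) atTop (𝓝 0) := by
  have hsucc : Tendsto (fun N => avgSeq x (N + 1)) atTop (𝓝 L) :=
    (tendsto_add_atTop_iff_nat 1).2 h
  have hlim := (hsucc.sub h).add (hsucc.mul tendsto_inv_atTop_nhds_zero_nat)
  rw [sub_self, mul_zero, add_zero] at hlim
  refine hlim.congr' ((eventually_ne_atTop 0).mono fun N hN => ?_)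
  have hx : x N = ((N : ℝ) + 1) * avgSeq x (N + 1) - N * avgSeq x N := by
    rw [← Nat.cast_add_one, natCast_mul_avgSeq, natCast_mul_avgSeq, sum_range_succ]; ring
  simp only [hx]
  field_simp
  ring

theorem tendsto_div_sum_range_of_tendsto_avgSeq {x : ℕ → ℝ} {L : ℝ}
    (h : Tendsto (avgSeq x) atTop (𝓝 L)) (hL : L ≠ 0) :
    Tendsto (fun N => x N / ∑ i ∈ range N, x i) atTop (𝓝 0) := by
  simpa [← natCast_mul_avgSeq, ← div_div, Pi.div_def] using
    (tendsto_div_natCast_of_tendsto_avgSeq h).div h hL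

theorem eventually_sum_range_pos_of_tendsto_avgSeq {x : ℕ → ℝ} {L : ℝ}
    (h : Tendsto (avgSeq x) atTop (𝓝 L)) (hL : 0 < L) :
    ∀ᶠ N in atTop, 0 < ∑ i ∈ range N, x i := by
  filter_upwards [h.eventually_const_lt hL, eventually_gt_atTop 0] with N hA hN
  rw [← natCast_mul_avgSeq]
  exact mul_pos (Nat.cast_pos.2 hN) hA

theorem tendsto_atTop_of_tendsto_comp_atTop {ι β : Type*} [Preorder β] [NoMaxOrder β]
    {f : ℕ → β} {g : ι → ℕ} {l : Filter ι} (h : Tendsto (f ∘ g) l atTop) :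
    Tendsto g l atTop := by
  refine tendsto_atTop.2 fun M => ?_
  filter_upwards [(eventually_all_finset (range M)).2 fun k _ => h.eventually_gt_atTop (f k)]
    with i hi
  by_contra! hlt
  exact lt_irrefl _ (hi (g i) (mem_range.2 hlt))

section Interleave

variable (b c : ℕ → ℝ)

@[simp]
theorem interleave_two_mul (n : ℕ) : interleave b c (2 * n) = b n := by
  simp [interleave]

@[simp]
theorem interleave_two_mul_add_one (n : ℕ) : interleave b c (2 * n + 1) = c n := by
  simp [interleave, Nat.add_mod, Nat.add_div]

theorem sum_range_two_mul_interleave (n : ℕ) :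
    ∑ m ∈ range (2 * n), interleave b c m = ∑ j ∈ range n, (b j + c j) := by
  induction n with
  | zero => simp
  | succ n ih =>
    rw [mul_add_one, sum_range_succ, sum_range_succ, sum_range_succ, ih]
    simp only [interleave_two_mul, interleave_two_mul_add_one]
    ring

variable {c}

theorem interleave_zero_nonneg (hc : ∀ n, 0 ≤ c n) (m : ℕ) :
    0 ≤ interleave (fun _ => 0) c m := by
  obtain ⟨k, rfl | rfl⟩ := Nat.even_or_odd' m <;> simp [hc]

theorem sum_interleave_zero_le_of_lt (hc : ∀ n, 0 ≤ c n) (hmono : Monotone c) {s : Finset ℕ}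
    {n : ℕ} (hs : ∀ m ∈ s, interleave (fun _ => 0) c m < c n) :
    ∑ m ∈ s, interleave (fun _ => 0) c m ≤ ∑ j ∈ range n, c j := by
  have hsmall : ∀ m ∈ s, interleave (fun _ => 0) c m ≠ 0 → m < 2 * n := by
    intro m hm hne
    obtain ⟨k, rfl | rfl⟩ := Nat.even_or_odd' m
    · simp at hne
    · have := hmono.reflect_lt (by simpa using hs _ hm)
      omega
  calc ∑ m ∈ s, interleave (fun _ => 0) c m
      = ∑ m ∈ s with m < 2 * n, interleave (fun _ => 0) c m := (sum_filter_of_ne hsmall).symm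
    _ ≤ ∑ m ∈ range (2 * n), interleave (fun _ => 0) c m :=
      sum_le_sum_of_subset_of_nonneg (fun m hm => mem_range.2 (mem_filter.1 hm).2)
        fun m _ _ => interleave_zero_nonneg hc m
    _ = ∑ j ∈ range n, c j := by simp [sum_range_two_mul_interleave]

theorem exists_le_interleave_comp_and_sum_le (hc : ∀ n, 0 ≤ c n) (hmono : Monotone c)
    {p : ℕ → ℕ} (hp : p.Bijective) (n : ℕ) :
    ∃ N, c n ≤ interleave (fun _ => 0) c (p N) ∧
      ∑ k ∈ range N, interleave (fun _ => 0) c (p k) ≤ ∑ j ∈ range n, c j := by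
  classical
  have hex : ∃ N, c n ≤ interleave (fun _ => 0) c (p N) := by
    obtain ⟨N, hN⟩ := hp.2 (2 * n + 1)
    exact ⟨N, by simp [hN]⟩
  refine ⟨Nat.find hex, Nat.find_spec hex, ?_⟩
  rw [← sum_image fun k _ l _ hkl => hp.1 hkl]
  refine sum_interleave_zero_le_of_lt hc hmono fun m hm => ?_
  obtain ⟨k, hk, rfl⟩ := mem_image.1 hm
  exact lt_of_not_ge (Nat.find_min hex (mem_range.1 hk))

end Interleave

/-- For `(a_n) = (0)||(c_n)` with `(c_n)` nondecreasing, positive, `c_n → +∞`: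
if `1` is accessible in average by rearrangement of `(a_n)`, then
`cₙ / (c₁ + ⋯ + c₍ₙ₋₁₎) → 0`. -/
theorem stmt9 (c : ℕ → ℝ) (hpos : ∀ n, 0 < c n) (hmono : Monotone c)
    (htop : Tendsto c atTop atTop)
    (h1 : (1 : EReal) ∈ AAR (interleave (fun _ => 0) c)) :
    Tendsto (fun n => c n / ∑ i ∈ Finset.range n, c i) atTop (𝓝 0) := by
  set a := interleave (fun _ => 0) c
  have hc : ∀ n, 0 ≤ c n := fun n => (hpos n).le
  have hS : ∀ n, 0 ≤ ∑ i ∈ range n, c i := fun n => sum_nonneg fun i _ => hc i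
  obtain ⟨p, hp, havg⟩ := h1
  have hA : Tendsto (avgSeq (a ∘ p)) atTop (𝓝 1) := by
    rwa [avgTendsTo, ← EReal.coe_one, EReal.tendsto_coe] at havg
  choose N hcN hsum using exists_le_interleave_comp_and_sum_le hc hmono hp
  have hN : Tendsto N atTop atTop :=
    tendsto_atTop_of_tendsto_comp_atTop (f := a ∘ p) (tendsto_atTop_mono hcN htop)
  refine squeeze_zero' (Eventually.of_forall fun n => div_nonneg (hc n) (hS n))
    ?_ ((tendsto_div_sum_range_of_tendsto_avgSeq hA one_ne_zero).comp hN)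
  filter_upwards [hN.eventually (eventually_sum_range_pos_of_tendsto_avgSeq hA one_pos)]
    with n hT
  calc c n / ∑ i ∈ range n, c i ≤ a (p (N n)) / ∑ i ∈ range n, c i :=
        div_le_div_of_nonneg_right (hcN n) (hS n)
    _ ≤ a (p (N n)) / ∑ k ∈ range (N n), a (p k) :=
        div_le_div_of_nonneg_left (interleave_zero_nonneg hc _) hT (hsum n)
end
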